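/- Let g_1(x; y), …, g_R(x; y) ∈ ℤ[x_1, …, x_{n_1}, y_1, …, y_{n_2}] be polynomials. If q, q' ∈ ℕ and gcd(q, q') = 1, then A(qq') = A(q) A(q'), where A(q) = Σ_{0 ≤ a < q, gcd(q, a_1, …, a_R) = 1} φ(q)^{−(n_1+n_2)} 𝒮_{a,q}. -/

import Mathlib

open MvPolynomial

/-- `e(t) = e^{2πit}`. -/
noncomputable def eChar (t : ℝ) : ℂ := Complex.exp (2 * Real.pi * Complex.I * t)

open scoped Classical in
/-- The complete exponential sum `𝒮_{a,q} = Σ_{k ∈ U_q^{n₁+n₂}} e(Σ_r g_r(k₁;k₂) a_r/q)`. -/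
noncomputable def expSumSaq {n₁ n₂ R : ℕ} (g : Fin R → MvPolynomial (Fin n₁ ⊕ Fin n₂) ℤ)
    (q : ℕ) (a : Fin R → ℕ) : ℂ :=
  ∑' k : Fin n₁ ⊕ Fin n₂ → ℕ,
    if ∀ v, k v < q ∧ Nat.Coprime (k v) q then
      eChar (((∑ r, eval (fun v => (k v : ℤ)) (g r) * (a r : ℤ) : ℤ) : ℝ) / (q : ℝ))
    else 0

open scoped Classical in
/-- `A(q) = Σ_{0 ≤ a < q, gcd(q,a)=1} φ(q)^{−(n₁+n₂)} 𝒮_{a,q}`. -/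
noncomputable def Aq {n₁ n₂ R : ℕ} (g : Fin R → MvPolynomial (Fin n₁ ⊕ Fin n₂) ℤ)
    (q : ℕ) : ℂ :=
  ∑' a : Fin R → ℕ,
    if (∀ r, a r < q) ∧ Nat.gcd q (Finset.univ.gcd a) = 1 then
      ((Nat.totient q : ℂ) ^ (n₁ + n₂))⁻¹ * expSumSaq g q a
    else 0

/-! The Chinese remainder isomorphism `ZMod (q * q') ≃+* ZMod q × ZMod q'` splits both the
units `k` and the vectors `a`. Writing `s q + t q' = 1`, the
character `e(x / qq')` becomes `e(t x / q) e(s x / q')`, so each `𝒮_{a,qq'}` is the product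
`𝒮_{t a, q} 𝒮_{s a, q'}` of the reductions of `a`. The condition `gcd(q, a) = 1` says that the
`a_r` generate the unit ideal of `ZMod q`, which is preserved by this splitting and by scaling
with the units `t mod q` and `s mod q'`, so the twisted sums over `a` are again the sums
defining `A(q)` and `A(q')`; finally `φ` is multiplicative. -/

open Finset

theorem Nat.cast_finset_gcd {ι : Type*} (s : Finset ι) (f : ι → ℕ) :
    ((s.gcd f : ℕ) : ℤ) = s.gcd fun i => (f i : ℤ) := by
  classical
  induction s using Finset.induction with
  | empty => simp
  | insert i s _ ih =>
    rw [gcd_insert, gcd_insert, ← ih, ← Int.coe_gcd, Int.gcd_natCast_natCast]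
    rfl

section Unimodular

variable {ι A B : Type*} [CommRing A] [CommRing B]

def IsUnimodular (a : ι → A) : Prop := Ideal.span (Set.range a) = ⊤

theorem isUnimodular_smul_iff {u : A} (hu : IsUnit u) {a : ι → A} :
    IsUnimodular (u • a) ↔ IsUnimodular a := by
  rw [IsUnimodular, IsUnimodular, Pi.smul_def, Set.range_smul]
  exact iff_of_eq (congrArg (· = ⊤) (Submodule.span_smul_eq_of_isUnit _ u hu))

variable [Fintype ι]

theorem isUnimodular_iff_exists_sum_mul_eq_one {a : ι → A} :
    IsUnimodular a ↔ ∃ c : ι → A, ∑ i, c i * a i = 1 := by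
  rw [IsUnimodular, Ideal.eq_top_iff_one, Ideal.mem_span_range_iff_exists_fun]

theorem IsUnimodular.map {a : ι → A} (h : IsUnimodular a) (f : A →+* B) :
    IsUnimodular fun i => f (a i) := by
  obtain ⟨c, hc⟩ := isUnimodular_iff_exists_sum_mul_eq_one.1 h
  exact isUnimodular_iff_exists_sum_mul_eq_one.2 ⟨fun i => f (c i), by simpa using congrArg f hc⟩

theorem isUnimodular_map_ringEquiv_iff (e : A ≃+* B) {a : ι → A} :
    IsUnimodular (fun i => e (a i)) ↔ IsUnimodular a :=
  ⟨fun h => by simpa using h.map e.symm.toRingHom, fun h => h.map e.toRingHom⟩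

theorem isUnimodular_prodMk_iff {b : ι → A} {c : ι → B} :
    IsUnimodular (fun i => (b i, c i)) ↔ IsUnimodular b ∧ IsUnimodular c := by
  refine ⟨fun h => ⟨h.map (RingHom.fst A B), h.map (RingHom.snd A B)⟩, fun ⟨hb, hc⟩ => ?_⟩
  obtain ⟨x, hx⟩ := isUnimodular_iff_exists_sum_mul_eq_one.1 hb
  obtain ⟨y, hy⟩ := isUnimodular_iff_exists_sum_mul_eq_one.1 hc
  refine isUnimodular_iff_exists_sum_mul_eq_one.2 ⟨fun i => (x i, y i), ?_⟩
  ext <;> simp [Prod.fst_sum, Prod.snd_sum, hx, hy]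

theorem sum_ite_isUnimodular_smul [Fintype A] [DecidableEq ι] {M : Type*} [AddCommMonoid M]
    [DecidablePred (IsUnimodular (ι := ι) (A := A))] {u : A} (hu : IsUnit u) (F : (ι → A) → M) :
    ∑ a, (if IsUnimodular a then F (u • a) else 0) = ∑ a, if IsUnimodular a then F a else 0 := by
  obtain ⟨u, rfl⟩ := hu
  exact Fintype.sum_bijective (u • ·) (MulAction.bijective u) _ _ fun a => by
    simp only [Units.smul_def, isUnimodular_smul_iff u.isUnit]

theorem Ideal.span_range_natCast_eq_span_gcd (a : ι → ℕ) :
    Ideal.span (Set.range fun i => (a i : A)) = Ideal.span {((univ.gcd a : ℕ) : A)} := by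
  refine le_antisymm (Ideal.span_le.2 ?_) ((Ideal.span_singleton_le_iff_mem _).2 ?_)
  · rintro _ ⟨i, rfl⟩
    exact Ideal.mem_span_singleton.2 (Nat.cast_dvd_cast (gcd_dvd (mem_univ i)))
  · obtain ⟨c, hc⟩ := univ.gcd_eq_sum_mul fun i => (a i : ℤ)
    rw [← Int.cast_natCast, Nat.cast_finset_gcd, hc]
    push_cast
    exact Ideal.sum_mem _ fun i _ => Ideal.mul_mem_right _ _ (Ideal.subset_span ⟨i, rfl⟩)

theorem isUnimodular_natCast_iff {q : ℕ} (a : ι → ℕ) :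
    IsUnimodular (fun i => (a i : ZMod q)) ↔ Nat.Coprime q (univ.gcd a) := by
  rw [IsUnimodular, Ideal.span_range_natCast_eq_span_gcd, Ideal.span_singleton_eq_top,
    ZMod.isUnit_iff_coprime, Nat.coprime_comm]

end Unimodular

theorem eChar_intCast_div (q : ℕ) [NeZero q] (m : ℤ) :
    eChar ((m : ℝ) / q) = ZMod.stdAddChar (m : ZMod q) := by
  rw [eChar, ZMod.stdAddChar_coe]
  push_cast
  ring_nf

theorem ZMod.stdAddChar_eq_mul_of_bezout {q q' : ℕ} [NeZero q] [NeZero q'] {s t : ℤ}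
    (hst : s * q + t * q' = 1) (x : ZMod (q * q')) :
    stdAddChar x = stdAddChar ((t : ZMod q) * x.cast) * stdAddChar ((s : ZMod q') * x.cast) := by
  rw [← ZMod.intCast_zmod_cast x, ZMod.cast_intCast (dvd_mul_right q q'),
    ZMod.cast_intCast (dvd_mul_left q' q), ← Int.cast_mul, ← Int.cast_mul, stdAddChar_coe,
    stdAddChar_coe, stdAddChar_coe, ← Complex.exp_add]
  congr 1
  have hstC : (s : ℂ) * q + t * q' = 1 := by exact_mod_cast hst
  have hq : (q : ℂ) ≠ 0 := NeZero.ne _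
  have hq' : (q' : ℂ) ≠ 0 := NeZero.ne _
  push_cast
  field_simp
  linear_combination (-((x.cast : ℤ) : ℂ)) * hstC

section ExpSum

variable {σ ι : Type*} [Fintype ι] (g : ι → MvPolynomial σ ℤ)

noncomputable def phase {A : Type*} [CommRing A] (a : ι → A) (x : σ → A) : A :=
  ∑ i, aeval x (g i) * a i

theorem map_phase {A B : Type*} [CommRing A] [CommRing B] (f : A →+* B) (a : ι → A)
    (x : σ → A) : f (phase g a x) = phase g (fun i => f (a i)) (fun v => f (x v)) := by
  simp only [phase, map_sum, map_mul]
  refine sum_congr rfl fun i _ => ?_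
  rw [map_aeval, aeval_def, coe_eval₂Hom,
    Subsingleton.elim (f.comp (algebraMap ℤ A)) (algebraMap ℤ B)]

theorem phase_smul {A : Type*} [CommRing A] (c : A) (a : ι → A) (x : σ → A) :
    phase g (c • a) x = c * phase g a x := by
  simp only [phase, mul_sum, Pi.smul_apply, smul_eq_mul]
  exact sum_congr rfl fun i _ => by ring

variable [Fintype σ] [DecidableEq σ]

noncomputable def unitExpSum (q : ℕ) [NeZero q] (a : ι → ZMod q) : ℂ :=
  ∑ k : σ → (ZMod q)ˣ, ZMod.stdAddChar (phase g a fun v => (k v : ZMod q))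

theorem unitExpSum_mul {q q' : ℕ} [NeZero q] [NeZero q'] {s t : ℤ} (hst : s * q + t * q' = 1)
    (a : ι → ZMod (q * q')) :
    unitExpSum g (q * q') a =
      unitExpSum g q ((t : ZMod q) • fun i => (a i).cast) *
        unitExpSum g q' ((s : ZMod q') • fun i => (a i).cast) := by
  have hco : q.Coprime q' := Nat.isCoprime_iff_coprime.1 ⟨s, t, hst⟩
  let E : (σ → (ZMod (q * q'))ˣ) ≃ (σ → (ZMod q)ˣ) × (σ → (ZMod q')ˣ) :=
    (Equiv.piCongrRight fun _ => ((Units.mapEquiv (ZMod.chineseRemainder hco).toMulEquiv).trans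
      MulEquiv.prodUnits).toEquiv).trans (Equiv.arrowProdEquivProdArrow _ _ _)
  rw [unitExpSum, unitExpSum, unitExpSum, sum_mul_sum, ← Fintype.sum_prod_type']
  refine Fintype.sum_equiv E _ _ fun k => ?_
  have hE₁ : ∀ v, ((E k).1 v : ZMod q) = ZMod.castHom (dvd_mul_right q q') (ZMod q) (k v) :=
    fun v => Prod.fst_zmod_cast (k v : ZMod (q * q'))
  have hE₂ : ∀ v, ((E k).2 v : ZMod q') = ZMod.castHom (dvd_mul_left q' q) (ZMod q') (k v) :=
    fun v => Prod.snd_zmod_cast (k v : ZMod (q * q'))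
  rw [ZMod.stdAddChar_eq_mul_of_bezout hst, phase_smul, phase_smul,
    ← ZMod.castHom_apply (h := dvd_mul_right q q'), ← ZMod.castHom_apply (h := dvd_mul_left q' q),
    map_phase, map_phase]
  simp only [hE₁, hE₂, ZMod.castHom_apply]

variable [DecidableEq ι]

open scoped Classical in
noncomputable def unimodularSum (q : ℕ) [NeZero q] : ℂ :=
  ∑ a : ι → ZMod q, if IsUnimodular a then unitExpSum g q a else 0

theorem unimodularSum_mul {q q' : ℕ} [NeZero q] [NeZero q'] (hco : q.Coprime q') :
    unimodularSum g (q * q') = unimodularSum g q * unimodularSum g q' := by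
  classical
  obtain ⟨s, t, hst⟩ := Nat.isCoprime_iff_coprime.2 hco
  have ht : IsUnit (t : ZMod q) := IsUnit.of_mul_eq_one (q' : ZMod q) <| by
    simpa [mul_comm] using congrArg (Int.cast : ℤ → ZMod q) hst
  have hs : IsUnit (s : ZMod q') := IsUnit.of_mul_eq_one (q : ZMod q') <| by
    simpa [mul_comm] using congrArg (Int.cast : ℤ → ZMod q') hst
  let E : (ι → ZMod (q * q')) ≃ (ι → ZMod q) × (ι → ZMod q') :=
    (Equiv.piCongrRight fun _ => (ZMod.chineseRemainder hco).toEquiv).trans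
      (Equiv.arrowProdEquivProdArrow _ _ _)
  have hE : ∀ a, E a = ((fun i => (a i).cast), fun i => (a i).cast) := fun a =>
    Prod.ext (funext fun i => Prod.fst_zmod_cast (a i)) (funext fun i => Prod.snd_zmod_cast (a i))
  have hE_unimodular : ∀ a, IsUnimodular a ↔ IsUnimodular (E a).1 ∧ IsUnimodular (E a).2 :=
    fun a => by
      rw [← isUnimodular_map_ringEquiv_iff (ZMod.chineseRemainder hco), ← isUnimodular_prodMk_iff]
      rfl
  calc unimodularSum g (q * q')
      = ∑ b : (ι → ZMod q) × (ι → ZMod q'), if IsUnimodular b.1 ∧ IsUnimodular b.2 then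
          unitExpSum g q ((t : ZMod q) • b.1) * unitExpSum g q' ((s : ZMod q') • b.2) else 0 :=
        Fintype.sum_equiv E _ _ fun a => by
          simp only [hE_unimodular a, hE a, unitExpSum_mul g hst]
    _ = (∑ b, if IsUnimodular b then unitExpSum g q ((t : ZMod q) • b) else 0) *
          ∑ b, if IsUnimodular b then unitExpSum g q' ((s : ZMod q') • b) else 0 := by
        simp only [Fintype.sum_prod_type, sum_mul_sum, ite_zero_mul_ite_zero]
    _ = unimodularSum g q * unimodularSum g q' := by
        rw [sum_ite_isUnimodular_smul ht, sum_ite_isUnimodular_smul hs, unimodularSum,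
          unimodularSum]

end ExpSum

theorem expSumSaq_eq_unitExpSum {n₁ n₂ R : ℕ} (g : Fin R → MvPolynomial (Fin n₁ ⊕ Fin n₂) ℤ)
    (q : ℕ) [NeZero q] (a : Fin R → ℕ) :
    expSumSaq g q a = unitExpSum g q fun r => (a r : ZMod q) := by
  let val : (Fin n₁ ⊕ Fin n₂ → (ZMod q)ˣ) → (Fin n₁ ⊕ Fin n₂ → ℕ) :=
    fun k v => (k v : ZMod q).val
  have hval : Function.Injective val := fun k k' h =>
    funext fun v => Units.ext (ZMod.val_injective q (congrFun h v))
  rw [expSumSaq, ← hval.tsum_eq, tsum_fintype, unitExpSum]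
  · refine Fintype.sum_congr _ _ fun k => ?_
    rw [if_pos fun v => ⟨ZMod.val_lt _, ZMod.val_coe_unit_coprime _⟩, eChar_intCast_div]
    congr 1
    simpa [phase, val] using map_phase g (Int.castRingHom (ZMod q)) (fun r => (a r : ℤ))
      (fun v => ((k v : ZMod q).val : ℤ))
  · intro k hk
    obtain ⟨hk, -⟩ := ne_eq _ _ ▸ ite_ne_right_iff.1 hk
    exact ⟨fun v => ZMod.unitOfCoprime (k v) (hk v).2,
      funext fun v => ZMod.val_natCast_of_lt (hk v).1⟩

theorem Aq_eq_unimodularSum {n₁ n₂ R : ℕ} (g : Fin R → MvPolynomial (Fin n₁ ⊕ Fin n₂) ℤ)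
    (q : ℕ) [NeZero q] :
    Aq g q = ((q.totient : ℂ) ^ (n₁ + n₂))⁻¹ * unimodularSum g q := by
  let val : (Fin R → ZMod q) → (Fin R → ℕ) := fun a r => (a r).val
  have hval : Function.Injective val := fun a a' h =>
    funext fun r => ZMod.val_injective q (congrFun h r)
  rw [Aq, unimodularSum, Finset.mul_sum]
  refine (hval.tsum_eq ?_).symm.trans ((tsum_fintype _).trans ?_)
  · intro a ha
    obtain ⟨⟨ha, -⟩, -⟩ := ne_eq _ _ ▸ ite_ne_right_iff.1 ha
    exact ⟨fun r => a r, funext fun r => ZMod.val_natCast_of_lt (ha r)⟩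
  · refine sum_congr rfl fun a _ => ?_
    have ha : (fun r => ((a r).val : ZMod q)) = a := funext fun r => ZMod.natCast_zmod_val _
    have hcond : ((∀ r, (a r).val < q) ∧ Nat.Coprime q (univ.gcd fun r => (a r).val)) ↔
        IsUnimodular a := by
      rw [← isUnimodular_natCast_iff, ha]
      exact and_iff_right fun r => ZMod.val_lt _
    simp only [val, expSumSaq_eq_unitExpSum, ha, mul_ite, mul_zero]
    classical
    exact if_congr hcond rfl rfl

/-- **Lemma (multiplicativity of A)**.  For `gcd(q, q') = 1` one has `A(qq') = A(q)A(q')`. -/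
theorem Aq_multiplicative
    (n₁ n₂ R : ℕ)
    (g : Fin R → MvPolynomial (Fin n₁ ⊕ Fin n₂) ℤ)
    (q q' : ℕ) (hq : 1 ≤ q) (hq' : 1 ≤ q') (hco : Nat.Coprime q q') :
    Aq g (q * q') = Aq g q * Aq g q' := by
  have : NeZero q := ⟨by omega⟩
  have : NeZero q' := ⟨by omega⟩
  rw [Aq_eq_unimodularSum, Aq_eq_unimodularSum, Aq_eq_unimodularSum, unimodularSum_mul g hco,
    Nat.totient_mul hco]
  push_cast
  ring
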